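/- arXiv:1005.3681 — 2 statements merged into one kernel-verified Lean document; each statement's English description precedes it below -/
import Mathlib

section
/- Let B > 0 and let (β_j)_{j≥0} be a sequence of reals with Σ_{j=0}^∞ β_j²·2^j ≤ B, so that p(a) = Σ_{j=0}^∞ β_j·a^j defines a function on [−1,1]. Then for every w in the closed unit ball of ℝⁿ there exists v ∈ ℓ²(I) with ‖v‖² ≤ B such that ⟨v, ψ(x)⟩ = p(⟨w,x⟩) for every x in the closed unit ball of ℝⁿ. -/
/-!
Take `v(k₁,…,k_j) = β_j · 2^{j/2} · w_{k₁}⋯w_{k_j}`. The factor `2^{j/2}` cancels the one in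
`ψ`, so `v(l) ψ(x)(l) = β_j ∏ᵢ w_{kᵢ} x_{kᵢ}`, and summing over all tuples of length `j` gives
`β_j ⟨w, x⟩^j`. Likewise `v(l)²` sums to `β_j² 2^j ‖w‖^{2j} ≤ β_j² 2^j` over the tuples of
length `j`. Absolute convergence of `∑ β_j ⟨w, x⟩^j` comes from `2|β_j| ≤ β_j² 2^j + 2^{-j}`.
-/

/-- The feature map `ψ`: the entry of `ψ(x)` at a tuple `(k₁,…,k_j)` (a list over
`{1,…,n}`) is `2^{-j/2}·x_{k₁}⋯x_{k_j}`. -/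
noncomputable def psiFun (n : ℕ) (x : EuclideanSpace ℝ (Fin n)) (l : List (Fin n)) : ℝ :=
  (2 : ℝ) ^ (-(l.length : ℝ) / 2) * (l.map fun k => x k).prod

open Finset

theorem hasSum_list_length_mul_prod {ι : Type*} [Fintype ι] (g : ℕ → ℝ) (u : ι → ℝ)
    (hs : Summable fun j => |g j| * (∑ k, |u k|) ^ j) :
    HasSum (fun l : List ι => g l.length * (l.map u).prod) (∑' j, g j * (∑ k, u k) ^ j) := by
  set F : (Σ j, Fin j → ι) → ℝ := fun p => g p.1 * ∏ i, u (p.2 i)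
  have sum_fiber (j : ℕ) (c : ℝ) (v : ι → ℝ) :
      ∑' f : Fin j → ι, c * ∏ i, v (f i) = c * (∑ k, v k) ^ j := by
    rw [tsum_fintype, Fintype.sum_pow, mul_sum]
  have hF_abs : Summable fun p => |F p| := by
    refine (summable_sigma_of_nonneg fun _ => abs_nonneg _).mpr ⟨fun _ => .of_finite, ?_⟩
    convert hs using 2 with j
    simpa [F, abs_mul, abs_prod] using sum_fiber j |g j| (|u ·|)
  have hF : HasSum F (∑' j, g j * (∑ k, u k) ^ j) := by
    simpa only [hF_abs.of_abs.tsum_sigma, F, sum_fiber] using hF_abs.of_abs.hasSum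
  have hcomp : F ∘ List.equivSigmaTuple = fun l : List ι => g l.length * (l.map u).prod := by
    ext l
    simp [F, List.equivSigmaTuple]
  rw [← hcomp]
  exact (Equiv.hasSum_iff _).mpr hF

theorem summable_abs_of_summable_sq_mul_pow {a : ℕ → ℝ} {c : ℝ} (hc : 1 < c)
    (h : Summable fun j => a j ^ 2 * c ^ j) : Summable fun j => |a j| := by
  refine .of_nonneg_of_le (fun _ => abs_nonneg _) (fun j => ?_)
    ((h.add (summable_geometric_of_lt_one (by positivity) (inv_lt_one_of_one_lt₀ hc))).div_const 2)
  have hcj : 0 < c ^ j := by positivity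
  have : 2 * |a j| * c ^ j ≤ a j ^ 2 * c ^ j * c ^ j + 1 := by
    have := sq_nonneg (|a j| * c ^ j - 1)
    rw [sub_sq, mul_pow, sq_abs] at this
    linarith
  rw [inv_pow, le_div_iff₀ two_pos, ← mul_le_mul_iff_of_pos_right hcj, add_mul,
    inv_mul_cancel₀ hcj.ne']
  linarith

theorem sum_abs_mul_le_norm_mul_norm {ι : Type*} [Fintype ι] (w x : EuclideanSpace ℝ ι) :
    ∑ k, |w k * x k| ≤ ‖w‖ * ‖x‖ := by
  refine le_of_pow_le_pow_left₀ two_ne_zero (by positivity) ?_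
  calc (∑ k, |w k * x k|) ^ 2 = (∑ k, |w k| * |x k|) ^ 2 := by simp only [abs_mul]
    _ ≤ (∑ k, |w k| ^ 2) * ∑ k, |x k| ^ 2 := sum_mul_sq_le_sq_mul_sq _ _ _
    _ = (‖w‖ * ‖x‖) ^ 2 := by
      simp only [sq_abs, mul_pow, EuclideanSpace.real_norm_sq_eq]

section

variable {n : ℕ} (β : ℕ → ℝ) (w : EuclideanSpace ℝ (Fin n))

noncomputable def halfspaceCoeffs (l : List (Fin n)) : ℝ :=
  β l.length * (2 : ℝ) ^ ((l.length : ℝ) / 2) * (l.map fun k => w k).prod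

theorem halfspaceCoeffs_sq (l : List (Fin n)) :
    halfspaceCoeffs β w l ^ 2 = β l.length ^ 2 * 2 ^ l.length * (l.map fun k => w k ^ 2).prod := by
  have h2 : ((2 : ℝ) ^ ((l.length : ℝ) / 2)) ^ 2 = 2 ^ l.length := by
    rw [← Real.rpow_mul_natCast zero_le_two, Nat.cast_ofNat, div_mul_cancel₀ _ two_ne_zero,
      Real.rpow_natCast]
  rw [halfspaceCoeffs, mul_pow, mul_pow, h2]
  simp only [sq, List.prod_map_mul]

theorem halfspaceCoeffs_mul_psiFun (x : EuclideanSpace ℝ (Fin n)) (l : List (Fin n)) :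
    halfspaceCoeffs β w l * psiFun n x l = β l.length * (l.map fun k => w k * x k).prod := by
  have h2 : (2 : ℝ) ^ ((l.length : ℝ) / 2) * 2 ^ (-(l.length : ℝ) / 2) = 1 := by
    rw [← Real.rpow_add two_pos, ← add_div, add_neg_cancel, zero_div, Real.rpow_zero]
  rw [halfspaceCoeffs, psiFun, List.prod_map_mul]
  linear_combination β l.length * (l.map fun k => w k).prod * (l.map fun k => x k).prod * h2

theorem hasSum_halfspaceCoeffs_sq
    (hβw : Summable fun j => β j ^ 2 * 2 ^ j * (‖w‖ ^ 2) ^ j) :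
    HasSum (fun l => halfspaceCoeffs β w l ^ 2) (∑' j, β j ^ 2 * 2 ^ j * (‖w‖ ^ 2) ^ j) := by
  have hnorm : ∑ k, w k ^ 2 = ‖w‖ ^ 2 := (EuclideanSpace.real_norm_sq_eq w).symm
  simp only [halfspaceCoeffs_sq, ← hnorm]
  refine hasSum_list_length_mul_prod _ _ ?_
  simpa only [abs_pow, sq_abs, abs_mul, abs_two, hnorm] using hβw

theorem hasSum_halfspaceCoeffs_mul_psiFun (hβ : Summable fun j => |β j|)
    (x : EuclideanSpace ℝ (Fin n)) (hwx : ‖w‖ * ‖x‖ ≤ 1) :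
    HasSum (fun l => halfspaceCoeffs β w l * psiFun n x l) (∑' j, β j * inner ℝ w x ^ j) := by
  have hinner : inner ℝ w x = ∑ k, w k * x k := by simp [PiLp.inner_apply, mul_comm]
  simp only [halfspaceCoeffs_mul_psiFun, hinner]
  refine hasSum_list_length_mul_prod _ _ (hβ.of_nonneg_of_le (fun _ => by positivity) fun j => ?_)
  exact mul_le_of_le_one_right (abs_nonneg _)
    (pow_le_one₀ (by positivity) ((sum_abs_mul_le_norm_mul_norm w x).trans hwx))

end

theorem polynomial_halfspace_in_HB_general
    (n : ℕ) (B : ℝ) (β : ℕ → ℝ)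
    (hsum : Summable fun j => β j ^ 2 * 2 ^ j)
    (hle : (∑' j, β j ^ 2 * 2 ^ j) ≤ B)
    (w : EuclideanSpace ℝ (Fin n)) (hw : ‖w‖ ≤ 1) :
    ∃ v : List (Fin n) → ℝ, Memℓp v 2 ∧ (∑' l, (v l) ^ 2) ≤ B ∧
      ∀ x : EuclideanSpace ℝ (Fin n), ‖x‖ ≤ 1 →
        (∑' l, v l * psiFun n x l) = ∑' j, β j * (inner ℝ w x : ℝ) ^ j := by
  have hbound (j : ℕ) : β j ^ 2 * 2 ^ j * (‖w‖ ^ 2) ^ j ≤ β j ^ 2 * 2 ^ j :=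
    mul_le_of_le_one_right (by positivity)
      (pow_le_one₀ (by positivity) (pow_le_one₀ (norm_nonneg w) hw))
  have hsumw := hsum.of_nonneg_of_le (fun _ => by positivity) hbound
  have hsq := hasSum_halfspaceCoeffs_sq β w hsumw
  refine ⟨halfspaceCoeffs β w, ?_, ?_, fun x hx => ?_⟩
  · refine (memℓp_gen_iff (by norm_num)).mpr ?_
    simpa only [ENNReal.toReal_ofNat, Real.rpow_two, Real.norm_eq_abs, sq_abs] using hsq.summable
  · calc ∑' l, halfspaceCoeffs β w l ^ 2 = ∑' j, β j ^ 2 * 2 ^ j * (‖w‖ ^ 2) ^ j := hsq.tsum_eq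
      _ ≤ ∑' j, β j ^ 2 * 2 ^ j := hsumw.tsum_le_tsum hbound hsum
      _ ≤ B := hle
  · have hβ := summable_abs_of_summable_sq_mul_pow one_lt_two hsum
    exact (hasSum_halfspaceCoeffs_mul_psiFun β w hβ x (mul_le_one₀ hw (norm_nonneg x) hx)).tsum_eq

/-- every polynomial `p ∈ P_B` composed with a halfspace `w` is realized
as a linear functional `⟨v, ψ(·)⟩` with `‖v‖² ≤ B` in `ℓ²(I)`. -/
theorem polynomial_halfspace_in_HB
    (n : ℕ) (B : ℝ) (hB : 0 < B) (β : ℕ → ℝ)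
    (hsum : Summable fun j => β j ^ 2 * 2 ^ j)
    (hle : (∑' j, β j ^ 2 * 2 ^ j) ≤ B)
    (w : EuclideanSpace ℝ (Fin n)) (hw : ‖w‖ ≤ 1) :
    ∃ v : List (Fin n) → ℝ, Memℓp v 2 ∧ (∑' l, (v l) ^ 2) ≤ B ∧
      ∀ x : EuclideanSpace ℝ (Fin n), ‖x‖ ≤ 1 →
        (∑' l, v l * psiFun n x l) = ∑' j, β j * (inner ℝ w x : ℝ) ^ j :=
  polynomial_halfspace_in_HB_general n B β hsum hle w hw
end

section
/- Let μ > 0, let ε ∈ (0,1), and set L = (1/(4μ))·log((2 − ε)/ε). Let D be a probability distribution over X × {0,1}, where X is the closed unit ball of a real Hilbert space. Then for every w with ‖w‖ = 1, E_{(x,y)∼D}[|φ_sig(⟨w,x⟩) − y|] ≤ err_{D,μ}(w) + ε/2. -/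
/-!
With `4 L μ = log ((2 - ε) / ε)` the sigmoid takes the value `1 - ε/2` at `μ` and, by the
symmetry `φ(-a) = 1 - φ(a)`, the value `ε/2` at `-μ`. Since it is increasing with values in
`(0, 1)`, every labelled point on which the halfspace is correct with margin `μ` contributes at
most `ε/2` to the loss, and every other point at most `1`.
-/

open MeasureTheory

/-- The sigmoid transfer function `φ_sig(a) = 1/(1+exp(-4·L·a))`. -/
noncomputable def phiSig (L a : ℝ) : ℝ := 1 / (1 + Real.exp (-4 * L * a))

open Real

section Sigmoid

variable {L a : ℝ}

lemma phiSig_pos : 0 < phiSig L a := by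
  unfold phiSig; positivity

lemma phiSig_lt_one : phiSig L a < 1 := by
  unfold phiSig
  rw [div_lt_one (by positivity)]
  linarith [exp_pos (-4 * L * a)]

lemma measurable_phiSig : Measurable (phiSig L) := by
  unfold phiSig; fun_prop

lemma phiSig_neg : phiSig L (-a) = 1 - phiSig L a := by
  unfold phiSig
  have h : exp (-4 * L * -a) = (exp (-4 * L * a))⁻¹ := by rw [← exp_neg]; ring_nf
  rw [h]
  field_simp
  ring

lemma phiSig_monotone (hL : 0 ≤ L) : Monotone (phiSig L) := fun a b hab => by
  unfold phiSig
  exact one_div_le_one_div_of_le (by positivity)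
    (add_le_add_right (exp_le_exp.mpr (by nlinarith)) 1)

lemma phiSig_eq_of_mul_eq_log {ε : ℝ} (hε : ε ∈ Set.Ioo (0 : ℝ) 2)
    (h : 4 * L * a = log ((2 - ε) / ε)) : phiSig L a = 1 - ε / 2 := by
  obtain ⟨hε0, hε2⟩ := hε
  have hexp : exp (-4 * L * a) = ε / (2 - ε) := by
    rw [show -4 * L * a = -(4 * L * a) by ring, h, exp_neg, exp_log (by positivity), inv_div]
  have : 2 - ε ≠ 0 := by linarith
  rw [phiSig, hexp]
  field_simp
  ring

end Sigmoid

/-- The event counted by the `μ`-margin error rate, evaluated at `a = ⟨w, x⟩`. -/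
def MarginMistake (μ a y : ℝ) : Prop :=
  (if 0 < a then (1 : ℝ) else 0) ≠ y ∨ |a| ≤ μ

lemma measurableSet_marginMistake (μ : ℝ) :
    MeasurableSet {q : ℝ × ℝ | MarginMistake μ q.1 q.2} := by
  have hsign : Measurable fun q : ℝ × ℝ => if 0 < q.1 then (1 : ℝ) else 0 :=
    Measurable.ite (measurableSet_lt measurable_const measurable_fst)
      measurable_const measurable_const
  exact (measurableSet_eq_fun hsign measurable_snd).compl.union
    (measurableSet_le measurable_fst.abs measurable_const)

section Loss

variable {L μ δ a y : ℝ}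

lemma abs_phiSig_sub_le_one (hy : y ∈ Set.Icc (0 : ℝ) 1) : |phiSig L a - y| ≤ 1 :=
  abs_sub_le_of_nonneg_of_le phiSig_pos.le phiSig_lt_one.le hy.1 hy.2

lemma abs_phiSig_sub_le_of_not_marginMistake (hL : 0 ≤ L) (hμ : phiSig L μ = 1 - δ)
    (hy : y = 0 ∨ y = 1) (h : ¬ MarginMistake μ a y) : |phiSig L a - y| ≤ δ := by
  obtain ⟨hsign, hmargin⟩ : (if 0 < a then (1 : ℝ) else 0) = y ∧ μ < |a| := by
    simpa [MarginMistake] using h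
  rcases hy with rfl | rfl
  · have ha : a ≤ 0 := by
      by_contra! ha
      simp [ha] at hsign
    have hφ : phiSig L a ≤ phiSig L (-μ) :=
      phiSig_monotone hL (by rw [abs_of_nonpos ha] at hmargin; linarith)
    rw [phiSig_neg, hμ] at hφ
    rw [sub_zero, abs_of_pos phiSig_pos]
    linarith
  · have ha : 0 < a := by
      by_contra ha
      simp [ha] at hsign
    have hφ : phiSig L μ ≤ phiSig L a :=
      phiSig_monotone hL (by rw [abs_of_pos ha] at hmargin; linarith)
    rw [abs_of_neg (by linarith [phiSig_lt_one (L := L) (a := a)])]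
    linarith

lemma abs_phiSig_sub_le_indicator_add (hL : 0 ≤ L) (hμ : phiSig L μ = 1 - δ)
    (hy : y = 0 ∨ y = 1) :
    |phiSig L a - y| ≤ {q : ℝ × ℝ | MarginMistake μ q.1 q.2}.indicator 1 (a, y) + δ := by
  have hδ : 0 ≤ δ := by linarith [phiSig_lt_one (L := L) (a := μ)]
  by_cases h : MarginMistake μ a y
  · rw [Set.indicator_of_mem (show (a, y) ∈ _ from h), Pi.one_apply]
    have hy' : y ∈ Set.Icc (0 : ℝ) 1 := by rcases hy with rfl | rfl <;> norm_num
    linarith [abs_phiSig_sub_le_one (L := L) (a := a) hy']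
  · rw [Set.indicator_of_notMem (show (a, y) ∉ _ from h), zero_add]
    exact abs_phiSig_sub_le_of_not_marginMistake hL hμ hy h

end Loss

lemma integral_le_measureReal_add {Ω : Type*} [MeasurableSpace Ω] {D : Measure Ω}
    [IsProbabilityMeasure D] {f : Ω → ℝ} {S : Set Ω} {δ : ℝ} (hf : Integrable f D)
    (hS : MeasurableSet S) (hle : ∀ᵐ p ∂D, f p ≤ S.indicator 1 p + δ) :
    ∫ p, f p ∂D ≤ D.real S + δ := by
  have hind : Integrable (S.indicator (1 : Ω → ℝ)) D := (integrable_const 1).indicator hS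
  calc ∫ p, f p ∂D ≤ ∫ p, (S.indicator 1 p + δ) ∂D :=
        integral_mono_ae hf (hind.add (integrable_const δ) :) hle
    _ = D.real S + δ := by
        rw [integral_add hind (integrable_const δ), integral_indicator_one hS, integral_const]
        simp

theorem phiSig_err_le_margin_err_general
    {E : Type*} [NormedAddCommGroup E] [InnerProductSpace ℝ E]
    [MeasurableSpace E] [BorelSpace E]
    (μ ε L : ℝ) (hμ : 0 < μ) (hε : ε ∈ Set.Ioo (0 : ℝ) 1)
    (hL : L = (1 / (4 * μ)) * Real.log ((2 - ε) / ε))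
    (D : Measure (E × ℝ)) [IsProbabilityMeasure D]
    (hD : ∀ᵐ p ∂D, ‖p.1‖ ≤ 1 ∧ (p.2 = 0 ∨ p.2 = 1))
    (w : E) :
    (∫ p, |phiSig L (inner ℝ w p.1) - p.2| ∂D) ≤
      (D {p : E × ℝ |
        ((if 0 < (inner ℝ w p.1 : ℝ) then (1 : ℝ) else 0) ≠ p.2) ∨
          |(inner ℝ w p.1 : ℝ)| ≤ μ}).toReal + ε / 2 := by
  obtain ⟨hε0, hε1⟩ := hε
  have hL0 : 0 ≤ L := by
    rw [hL]
    exact mul_nonneg (by positivity) (log_nonneg (by rw [le_div_iff₀ hε0]; linarith))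
  have hφμ : phiSig L μ = 1 - ε / 2 :=
    phiSig_eq_of_mul_eq_log ⟨hε0, by linarith⟩ (by rw [hL]; field_simp)
  have hproj : Measurable fun p : E × ℝ => ((inner ℝ w p.1 : ℝ), p.2) :=
    (continuous_const.inner continuous_fst).measurable.prodMk measurable_snd
  have hbound : ∀ᵐ p ∂D, |phiSig L (inner ℝ w p.1) - p.2| ≤
      {p : E × ℝ | MarginMistake μ (inner ℝ w p.1) p.2}.indicator 1 p + ε / 2 := by
    filter_upwards [hD] with p hp
    exact abs_phiSig_sub_le_indicator_add hL0 hφμ hp.2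
  refine integral_le_measureReal_add (Integrable.of_bound ?_ (1 + ε / 2) ?_)
    (hproj (measurableSet_marginMistake μ)) hbound
  · exact ((measurable_phiSig.comp (measurable_fst.comp hproj)).sub measurable_snd).abs
      |>.aestronglyMeasurable
  · filter_upwards [hbound] with p hp
    rw [Real.norm_eq_abs, abs_abs]
    exact hp.trans (by gcongr; exact Set.indicator_le_self' (fun _ _ => zero_le_one) p)

/-- with `L = (1/(4μ))·log((2-ε)/ε)`, the error of `x ↦ φ_sig(⟨w,x⟩)`
is at most the `μ`-margin error rate of the halfspace `w` plus `ε/2`. -/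
theorem phiSig_err_le_margin_err
    {E : Type*} [NormedAddCommGroup E] [InnerProductSpace ℝ E]
    [MeasurableSpace E] [BorelSpace E]
    (μ ε L : ℝ) (hμ : 0 < μ) (hε : ε ∈ Set.Ioo (0 : ℝ) 1)
    (hL : L = (1 / (4 * μ)) * Real.log ((2 - ε) / ε))
    (D : Measure (E × ℝ)) [IsProbabilityMeasure D]
    (hD : ∀ᵐ p ∂D, ‖p.1‖ ≤ 1 ∧ (p.2 = 0 ∨ p.2 = 1))
    (w : E) (hw : ‖w‖ = 1) :
    (∫ p, |phiSig L (inner ℝ w p.1) - p.2| ∂D) ≤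
      (D {p : E × ℝ |
        ((if 0 < (inner ℝ w p.1 : ℝ) then (1 : ℝ) else 0) ≠ p.2) ∨
          |(inner ℝ w p.1 : ℝ)| ≤ μ}).toReal + ε / 2 :=
  phiSig_err_le_margin_err_general μ ε L hμ hε hL D hD w
end
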